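/- Let U, V, M be given real matrices with U^T U = I and V^T V = I. Then for every matrix Z satisfying U^T Z V = M, one has ‖Z‖_* ≥ ‖M‖_*. In particular, the minimum of ‖Z‖_* over the constraint set {Z : U^T Z V = M} equals ‖M‖_*. -/

import Mathlib

open Matrix

theorem Matrix.isHermitian_transpose_mul_self {m n : Type*} [Fintype m] (A : Matrix m n ℝ) :
    (Aᵀ * A).IsHermitian := by
  simpa [Matrix.conjTranspose_eq_transpose_of_trivial] using
    Matrix.isHermitian_conjTranspose_mul_self A

/-- The nuclear norm of a real matrix: the sum of its singular values,
i.e. the sum of the square roots of the eigenvalues of `Mᵀ * M`. -/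
noncomputable def nuclearNorm {m n : Type*} [Fintype m] [Fintype n] [DecidableEq n]
    (M : Matrix m n ℝ) : ℝ :=
  ∑ i, Real.sqrt ((Matrix.isHermitian_transpose_mul_self M).eigenvalues i)

/-!
The nuclear norm is dual to the spectral norm: `tr (Wᵀ Z) ≤ ‖W‖ ‖Z‖_*` (pair `W` and `Z` on an
orthonormal eigenbasis of `Zᵀ Z` and apply Cauchy–Schwarz), with equality for the partial isometry
`W = Z Q Σ⁺ Qᵀ`, where `Zᵀ Z = Q Σ² Qᵀ`. Consequently `‖A Z B‖_* ≤ ‖A‖ ‖B‖ ‖Z‖_*`. Since `U`, `V`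
and their transposes have spectral norm at most one, `‖Uᵀ Z V‖_* ≤ ‖Z‖_*` and
`‖U M Vᵀ‖_* ≤ ‖M‖_*`, while `U M Vᵀ` is feasible.
-/

open scoped InnerProductSpace Matrix.Norms.L2Operator

namespace Matrix

variable {k l m n : Type*} [Fintype k] [Fintype l] [Fintype m] [Fintype n] [DecidableEq n]

lemma nuclearNorm_nonneg (Z : Matrix m n ℝ) : 0 ≤ nuclearNorm Z :=
  Finset.sum_nonneg fun _ _ => Real.sqrt_nonneg _

lemma l2_opNorm_transpose [DecidableEq m] (A : Matrix m n ℝ) : ‖Aᵀ‖ = ‖A‖ := by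
  rw [← conjTranspose_eq_transpose_of_trivial, l2_opNorm_conjTranspose]

lemma l2_opNorm_transpose_mul_self (A : Matrix m n ℝ) : ‖Aᵀ * A‖ = ‖A‖ * ‖A‖ := by
  rw [← conjTranspose_eq_transpose_of_trivial, l2_opNorm_conjTranspose_mul_self]

lemma l2_opNorm_le_one_of_transpose_mul_self_eq_one {A : Matrix m n ℝ}
    (hA : Aᵀ * A = 1) : ‖A‖ ≤ 1 := by
  -- the C⋆-identity gives `‖A‖² = ‖1‖` and `‖1‖ = ‖1‖²`
  have hA_sq := l2_opNorm_transpose_mul_self A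
  have hone_sq := l2_opNorm_transpose_mul_self (1 : Matrix n n ℝ)
  rw [hA] at hA_sq
  rw [transpose_one, Matrix.one_mul] at hone_sq
  have hone : ‖(1 : Matrix n n ℝ)‖ ≤ 1 := by nlinarith [norm_nonneg (1 : Matrix n n ℝ)]
  nlinarith [norm_nonneg A]

lemma l2_opNorm_mul_mul_le {o p : Type*} [Fintype o] [Fintype p] [DecidableEq m]
    [DecidableEq p] (A : Matrix o m ℝ) (B : Matrix m n ℝ) (C : Matrix n p ℝ) :
    ‖A * B * C‖ ≤ ‖A‖ * ‖B‖ * ‖C‖ :=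
  (l2_opNorm_mul _ _).trans (by gcongr; exact l2_opNorm_mul _ _)

lemma l2_opNorm_mul_mul_transpose_le [DecidableEq m] {Q : Matrix m n ℝ} (hQ : Qᵀ * Q = 1)
    (X : Matrix n n ℝ) : ‖Q * X * Qᵀ‖ ≤ ‖X‖ := by
  have hQ₁ := l2_opNorm_le_one_of_transpose_mul_self_eq_one hQ
  calc ‖Q * X * Qᵀ‖ ≤ ‖Q‖ * ‖X‖ * ‖Qᵀ‖ := l2_opNorm_mul_mul_le _ _ _
    _ ≤ 1 * ‖X‖ * 1 := by gcongr; rwa [l2_opNorm_transpose]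
    _ = ‖X‖ := by ring

lemma l2_opNorm_diagonal_mul_inv_le_one (v : n → ℝ) : ‖diagonal (v * v⁻¹)‖ ≤ 1 := by
  rw [l2_opNorm_diagonal]
  refine (pi_norm_le_iff_of_nonneg zero_le_one).2 fun i => ?_
  rw [Pi.mul_apply, Pi.inv_apply, norm_mul, norm_inv]
  exact mul_inv_le_one

lemma IsHermitian.transpose_eigenvectorUnitary_mul_self {A : Matrix n n ℝ}
    (hA : A.IsHermitian) :
    (hA.eigenvectorUnitary : Matrix n n ℝ)ᵀ * hA.eigenvectorUnitary = 1 := by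
  rw [← conjTranspose_eq_transpose_of_trivial, ← star_eq_conjTranspose]
  exact Unitary.coe_star_mul_self hA.eigenvectorUnitary

lemma IsHermitian.eq_eigenvectorUnitary_mul_diagonal_mul_transpose {A : Matrix n n ℝ}
    (hA : A.IsHermitian) :
    A = hA.eigenvectorUnitary * diagonal hA.eigenvalues *
      (hA.eigenvectorUnitary : Matrix n n ℝ)ᵀ := by
  conv_lhs => rw [hA.spectral_theorem, Unitary.conjStarAlgAut_apply]
  rw [RCLike.ofReal_real_eq_id, Function.id_comp, star_eq_conjTranspose,
    conjTranspose_eq_transpose_of_trivial]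

lemma trace_eq_sum_inner {ι : Type*} [Fintype ι] (X : Matrix n n ℝ)
    (b : OrthonormalBasis ι ℝ (EuclideanSpace ℝ n)) :
    X.trace = ∑ i, ⟪b i, toEuclideanLin X (b i)⟫_ℝ := by
  rw [← LinearMap.trace_eq_sum_inner, toEuclideanLin_eq_toLin_orthonormal, trace_toLin_eq]

lemma inner_toEuclideanLin_toEuclideanLin (A B : Matrix m n ℝ)
    (x y : EuclideanSpace ℝ n) :
    ⟪toEuclideanLin A x, toEuclideanLin B y⟫_ℝ = ⟪x, toEuclideanLin (Aᵀ * B) y⟫_ℝ := by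
  simp only [EuclideanSpace.inner_eq_star_dotProduct, toLpLin_apply, star_trivial,
    ← mulVec_mulVec, dotProduct_mulVec, mulVec_transpose]

lemma norm_toEuclideanLin_eigenvectorBasis_sq (Z : Matrix m n ℝ) (i : n) :
    ‖toEuclideanLin Z ((isHermitian_transpose_mul_self Z).eigenvectorBasis i)‖ ^ 2 =
      (isHermitian_transpose_mul_self Z).eigenvalues i := by
  rw [← real_inner_self_eq_norm_sq, inner_toEuclideanLin_toEuclideanLin, toLpLin_apply,
    IsHermitian.mulVec_eigenvectorBasis, WithLp.toLp_smul, WithLp.toLp_ofLp,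
    real_inner_smul_right, real_inner_self_eq_norm_sq, OrthonormalBasis.norm_eq_one, one_pow,
    mul_one]

lemma eigenvalues_transpose_mul_self_nonneg (Z : Matrix m n ℝ) (i : n) :
    0 ≤ (isHermitian_transpose_mul_self Z).eigenvalues i :=
  norm_toEuclideanLin_eigenvectorBasis_sq Z i ▸ sq_nonneg _

theorem trace_transpose_mul_le (W Z : Matrix m n ℝ) :
    (Wᵀ * Z).trace ≤ ‖W‖ * nuclearNorm Z := by
  set b := (isHermitian_transpose_mul_self Z).eigenvectorBasis
  have hsqrt (i : n) : √((isHermitian_transpose_mul_self Z).eigenvalues i) =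
      ‖toEuclideanLin Z (b i)‖ := by
    rw [← norm_toEuclideanLin_eigenvectorBasis_sq, Real.sqrt_sq (norm_nonneg _)]
  calc (Wᵀ * Z).trace = ∑ i, ⟪toEuclideanLin W (b i), toEuclideanLin Z (b i)⟫_ℝ := by
        simp only [trace_eq_sum_inner _ b, inner_toEuclideanLin_toEuclideanLin]
    _ ≤ ∑ i, ‖toEuclideanLin W (b i)‖ * ‖toEuclideanLin Z (b i)‖ := by
        gcongr with i
        exact real_inner_le_norm _ _
    _ ≤ ∑ i, ‖W‖ * ‖toEuclideanLin Z (b i)‖ := by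
        gcongr with i
        simpa [b.norm_eq_one, toLpLin_apply] using l2_opNorm_mulVec W (b i)
    _ = ‖W‖ * nuclearNorm Z := by
        simp only [← Finset.mul_sum, nuclearNorm, hsqrt]

theorem exists_l2_opNorm_le_one_trace_transpose_mul_eq_nuclearNorm (Z : Matrix m n ℝ) :
    ∃ W : Matrix m n ℝ, ‖W‖ ≤ 1 ∧ (Wᵀ * Z).trace = nuclearNorm Z := by
  set hZ := isHermitian_transpose_mul_self Z
  set Q : Matrix n n ℝ := (hZ.eigenvectorUnitary : Matrix n n ℝ)
  set Λ := hZ.eigenvalues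
  set σ : n → ℝ := fun i => √(Λ i)
  have hQ : Qᵀ * Q = 1 := hZ.transpose_eigenvectorUnitary_mul_self
  have hspec : Zᵀ * Z = Q * diagonal Λ * Qᵀ :=
    hZ.eq_eigenvectorUnitary_mul_diagonal_mul_transpose
  have hσ (i : n) : (σ i)⁻¹ * Λ i = σ i := by
    have hΛ : Λ i = σ i * σ i :=
      (Real.mul_self_sqrt (eigenvalues_transpose_mul_self_nonneg Z i)).symm
    rw [hΛ, ← mul_assoc, inv_mul_mul_self]
  -- `σ⁻¹` inverts only the nonzero singular values, since `0⁻¹ = 0`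
  set W := Z * Q * diagonal σ⁻¹ * Qᵀ
  have hWZ : Wᵀ * Z = Q * diagonal σ * Qᵀ :=
    calc Wᵀ * Z = Q * diagonal σ⁻¹ * (Qᵀ * (Zᵀ * Z)) := by
          simp only [W, transpose_mul, transpose_transpose, diagonal_transpose, Matrix.mul_assoc]
      _ = Q * (diagonal σ⁻¹ * diagonal Λ) * Qᵀ := by
          rw [hspec, ← Matrix.mul_assoc Qᵀ, ← Matrix.mul_assoc Qᵀ, hQ, Matrix.one_mul]
          simp only [Matrix.mul_assoc]
      _ = Q * diagonal σ * Qᵀ := by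
          rw [diagonal_mul_diagonal]
          exact congrArg (fun v => Q * diagonal v * Qᵀ) (funext hσ)
  have hWW : Wᵀ * W = Q * diagonal (σ * σ⁻¹) * Qᵀ :=
    calc Wᵀ * W = Wᵀ * Z * (Q * diagonal σ⁻¹ * Qᵀ) := by simp only [W, Matrix.mul_assoc]
      _ = Q * (diagonal σ * (Qᵀ * Q) * diagonal σ⁻¹) * Qᵀ := by
          rw [hWZ]; simp only [Matrix.mul_assoc]
      _ = Q * diagonal (σ * σ⁻¹) * Qᵀ := by
          rw [hQ, Matrix.mul_one, diagonal_mul_diagonal]; rfl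
  refine ⟨W, ?_, ?_⟩
  · have hW : ‖W‖ * ‖W‖ ≤ 1 := by
      rw [← l2_opNorm_transpose_mul_self, hWW]
      exact (l2_opNorm_mul_mul_transpose_le hQ _).trans (l2_opNorm_diagonal_mul_inv_le_one σ)
    nlinarith [norm_nonneg W]
  · rw [hWZ, trace_mul_comm, ← Matrix.mul_assoc, hQ, Matrix.one_mul, trace_diagonal]
    rfl

theorem nuclearNorm_mul_mul_le [DecidableEq l] [DecidableEq m] (A : Matrix k m ℝ)
    (Z : Matrix m n ℝ) (B : Matrix n l ℝ) :
    nuclearNorm (A * Z * B) ≤ ‖A‖ * ‖B‖ * nuclearNorm Z := by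
  classical
  obtain ⟨W, hW, hWZ⟩ := exists_l2_opNorm_le_one_trace_transpose_mul_eq_nuclearNorm (A * Z * B)
  have hAWB : ‖Aᵀ * W * Bᵀ‖ ≤ ‖A‖ * ‖B‖ :=
    calc ‖Aᵀ * W * Bᵀ‖ ≤ ‖Aᵀ‖ * ‖W‖ * ‖Bᵀ‖ := l2_opNorm_mul_mul_le _ _ _
      _ ≤ ‖A‖ * 1 * ‖B‖ := by rw [l2_opNorm_transpose, l2_opNorm_transpose]; gcongr
      _ = ‖A‖ * ‖B‖ := by rw [mul_one]
  calc nuclearNorm (A * Z * B) = ((Aᵀ * W * Bᵀ)ᵀ * Z).trace := by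
        rw [← hWZ, ← Matrix.mul_assoc, trace_mul_comm (Wᵀ * (A * Z))]
        simp only [transpose_mul, transpose_transpose, Matrix.mul_assoc]
    _ ≤ ‖Aᵀ * W * Bᵀ‖ * nuclearNorm Z := trace_transpose_mul_le _ _
    _ ≤ ‖A‖ * ‖B‖ * nuclearNorm Z := mul_le_mul_of_nonneg_right hAWB (nuclearNorm_nonneg Z)

theorem nuclearNorm_mul_mul_le_of_l2_opNorm_le_one [DecidableEq l] [DecidableEq m]
    {A : Matrix k m ℝ} {B : Matrix n l ℝ} (hA : ‖A‖ ≤ 1) (hB : ‖B‖ ≤ 1) (Z : Matrix m n ℝ) :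
    nuclearNorm (A * Z * B) ≤ nuclearNorm Z :=
  (nuclearNorm_mul_mul_le A Z B).trans <|
    mul_le_of_le_one_left (nuclearNorm_nonneg Z) (mul_le_one₀ hA (norm_nonneg B) hB)

end Matrix

theorem stmt_3 {k l m n : Type*} [Fintype k] [Fintype l] [Fintype m] [Fintype n]
    [DecidableEq l] [DecidableEq m] [DecidableEq n]
    (U : Matrix k m ℝ) (V : Matrix l n ℝ) (M : Matrix m n ℝ)
    (hU : Uᵀ * U = 1) (hV : Vᵀ * V = 1) :
    (∀ Z : Matrix k l ℝ, Uᵀ * Z * V = M → nuclearNorm M ≤ nuclearNorm Z) ∧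
    (∃ Z : Matrix k l ℝ, Uᵀ * Z * V = M ∧ nuclearNorm Z = nuclearNorm M) := by
  classical
  have hU₁ : ‖U‖ ≤ 1 := l2_opNorm_le_one_of_transpose_mul_self_eq_one hU
  have hV₁ : ‖V‖ ≤ 1 := l2_opNorm_le_one_of_transpose_mul_self_eq_one hV
  have lower (Z : Matrix k l ℝ) (hZ : Uᵀ * Z * V = M) : nuclearNorm M ≤ nuclearNorm Z :=
    hZ ▸ nuclearNorm_mul_mul_le_of_l2_opNorm_le_one ((l2_opNorm_transpose U).trans_le hU₁) hV₁ Z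
  have hfeas : Uᵀ * (U * M * Vᵀ) * V = M := by
    simp only [← Matrix.mul_assoc, hU, Matrix.one_mul]
    rw [Matrix.mul_assoc, hV, Matrix.mul_one]
  refine ⟨lower, U * M * Vᵀ, hfeas, le_antisymm ?_ (lower _ hfeas)⟩
  exact nuclearNorm_mul_mul_le_of_l2_opNorm_le_one hU₁ ((l2_opNorm_transpose V).trans_le hV₁) M
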